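/- Let z(n), n ≥ 1, be i.i.d. mean-zero compactly supported random variables, θ ∈ (−1,1), and χ(n) = Σ_{k=0}^{n−1} θᵏ z(n−k). Then almost surely there is a constant C (depending on the realization but not on θ) with sup_{n>0} |χ(n)|/√(ln(e+n)) ≤ C·√(1/(1−θ²)). -/

import Mathlib

open MeasureTheory ProbabilityTheory Real

lemma aux_integrable_of_abs_le {Ω : Type*} [MeasureSpace Ω] [IsProbabilityMeasure (ℙ : Measure Ω)]
    {X : Ω → ℝ} (hm : Measurable X) {a : ℝ} (hb : ∀ᵐ ω, |X ω| ≤ a) : Integrable X := by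
  refine Integrable.mono' (integrable_const a) hm.aestronglyMeasurable ?_
  filter_upwards [hb] with ω hω using hω

lemma aux_integrable_exp {Ω : Type*} [MeasureSpace Ω] [IsProbabilityMeasure (ℙ : Measure Ω)]
    {X : Ω → ℝ} (hm : Measurable X) {a : ℝ} (hb : ∀ᵐ ω, |X ω| ≤ a) (t : ℝ) :
    Integrable (fun ω => Real.exp (t * X ω)) := by
  refine Integrable.mono' (integrable_const (Real.exp (|t| * a)))
    ((hm.const_mul t).exp).aestronglyMeasurable ?_
  filter_upwards [hb] with ω hω
  rw [Real.norm_eq_abs, abs_of_pos (Real.exp_pos _)]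
  apply Real.exp_le_exp.2
  calc t * X ω ≤ |t * X ω| := le_abs_self _
    _ = |t| * |X ω| := abs_mul _ _
    _ ≤ |t| * a := mul_le_mul_of_nonneg_left hω (abs_nonneg t)

lemma aux_mgf_le {Ω : Type*} [MeasureSpace Ω] [IsProbabilityMeasure (ℙ : Measure Ω)]
    {X : Ω → ℝ} (hm : Measurable X) {a : ℝ} (ha : 0 < a)
    (h0 : ∫ ω, X ω = 0) (hb : ∀ᵐ ω, |X ω| ≤ a) (t : ℝ) :
    mgf X ℙ t ≤ Real.exp (t ^ 2 * a ^ 2 / 2) := by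
  have key : ∀ᵐ ω, Real.exp (t * X ω) ≤
      Real.cosh (t * a) + (Real.sinh (t * a) / a) * X ω := by
    filter_upwards [hb] with ω hω
    set x := X ω with hx
    obtain ⟨h1, h2⟩ := abs_le.1 hω
    have hp0 : (0:ℝ) ≤ (a + x) / (2 * a) := by
      apply div_nonneg (by linarith) (by linarith)
    have hq0 : (0:ℝ) ≤ (a - x) / (2 * a) := by
      apply div_nonneg (by linarith) (by linarith)
    have hpq : (a + x) / (2 * a) + (a - x) / (2 * a) = 1 := by
      field_simp
      ring
    have hc := convexOn_exp.2 (Set.mem_univ (t * a)) (Set.mem_univ (-(t * a))) hp0 hq0 hpq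
    simp only [smul_eq_mul] at hc
    have harg : (a + x) / (2 * a) * (t * a) + (a - x) / (2 * a) * (-(t * a)) = t * x := by
      field_simp; ring
    rw [harg] at hc
    refine hc.trans_eq ?_
    rw [Real.cosh_eq, Real.sinh_eq]
    field_simp
    ring
  have hintX : Integrable X := aux_integrable_of_abs_le hm hb
  calc mgf X ℙ t = ∫ ω, Real.exp (t * X ω) := rfl
    _ ≤ ∫ ω, (Real.cosh (t * a) + (Real.sinh (t * a) / a) * X ω) := by
        refine integral_mono_ae (aux_integrable_exp hm hb t) ?_ key
        exact (integrable_const _).add (hintX.const_mul _)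
    _ = Real.cosh (t * a) := by
        rw [integral_add (integrable_const _) (hintX.const_mul _), integral_const,
          integral_const_mul, h0]
        simp
    _ ≤ Real.exp ((t * a) ^ 2 / 2) := Real.cosh_le_exp_half_sq _
    _ = Real.exp (t ^ 2 * a ^ 2 / 2) := by rw [mul_pow]

lemma aux_tail {Ω : Type*} [MeasureSpace Ω] [IsProbabilityMeasure (ℙ : Measure Ω)]
    (w : ℕ → Ω → ℝ) (hm : ∀ k, Measurable (w k))
    (hindep : iIndepFun w ℙ) {a : ℝ} (ha : 0 < a)
    (h0 : ∀ k, ∫ ω, w k ω = 0) (hb : ∀ k, ∀ᵐ ω, |w k ω| ≤ a)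
    (s : Finset ℕ) (hs : 0 < s.card) (u : ℝ) (hu : 0 < u) :
    (ℙ {ω | u ≤ (∑ j ∈ s, w j) ω}).toReal ≤
      Real.exp (-(u ^ 2) / (2 * s.card * a ^ 2)) := by
  set c : ℝ := (s.card : ℝ) with hc
  have hc0 : 0 < c := by rw [hc]; exact_mod_cast hs
  set t : ℝ := u / (c * a ^ 2) with htdef
  have ht : 0 < t := by positivity
  have hint : ∀ i ∈ s, Integrable (fun ω => Real.exp (t * w i ω)) := fun i _ =>
    aux_integrable_exp (hm i) (hb i) t
  have hint2 : Integrable (fun ω => Real.exp (t * (∑ i ∈ s, w i) ω)) :=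
    hindep.integrable_exp_mul_sum hm hint
  have hch := measure_ge_le_exp_mul_mgf (μ := ℙ) (X := ∑ i ∈ s, w i) u ht.le hint2
  have hmgf : mgf (∑ i ∈ s, w i) ℙ t ≤ Real.exp (c * (t ^ 2 * a ^ 2 / 2)) := by
    rw [hindep.mgf_sum hm]
    calc ∏ i ∈ s, mgf (w i) ℙ t ≤ ∏ i ∈ s, Real.exp (t ^ 2 * a ^ 2 / 2) := by
          refine Finset.prod_le_prod (fun i _ => mgf_nonneg) ?_
          exact fun i _ => aux_mgf_le (hm i) ha (h0 i) (hb i) t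
      _ = Real.exp (c * (t ^ 2 * a ^ 2 / 2)) := by
          rw [Finset.prod_const, ← Real.exp_nat_mul]
  calc (ℙ {ω | u ≤ (∑ i ∈ s, w i) ω}).toReal
      ≤ Real.exp (-t * u) * mgf (∑ i ∈ s, w i) ℙ t := hch
    _ ≤ Real.exp (-t * u) * Real.exp (c * (t ^ 2 * a ^ 2 / 2)) := by
        exact mul_le_mul_of_nonneg_left hmgf (Real.exp_pos _).le
    _ = Real.exp (-(u ^ 2) / (2 * c * a ^ 2)) := by
        rw [← Real.exp_add]
        congr 1
        rw [htdef]
        field_simp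
        ring

lemma aux_tail_abs {Ω : Type*} [MeasureSpace Ω] [IsProbabilityMeasure (ℙ : Measure Ω)]
    (w : ℕ → Ω → ℝ) (hm : ∀ k, Measurable (w k))
    (hindep : iIndepFun w ℙ) {a : ℝ} (ha : 0 < a)
    (h0 : ∀ k, ∫ ω, w k ω = 0) (hb : ∀ k, ∀ᵐ ω, |w k ω| ≤ a)
    (s : Finset ℕ) (hs : 0 < s.card) (u : ℝ) (hu : 0 < u) :
    ℙ {ω | u ≤ |∑ j ∈ s, w j ω|} ≤
      ENNReal.ofReal (2 * Real.exp (-(u ^ 2) / (2 * s.card * a ^ 2))) := by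
  have hneg : iIndepFun (fun k => -(w k)) ℙ := by
    exact hindep.comp (fun k (x : ℝ) => -x) (fun k => measurable_neg)
  have hmne : ∀ k, Measurable (-(w k)) := fun k => (hm k).neg
  have h0n : ∀ k, ∫ ω, (-(w k)) ω = 0 := by
    intro k; simp only [Pi.neg_apply, integral_neg, h0 k, neg_zero]
  have hbn : ∀ k, ∀ᵐ ω, |(-(w k)) ω| ≤ a := by
    intro k; filter_upwards [hb k] with ω hω; simpa using hω
  have h1 := aux_tail w hm hindep ha h0 hb s hs u hu
  have h2 := aux_tail (fun k => -(w k)) hmne hneg ha h0n hbn s hs u hu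
  have hsub : {ω | u ≤ |∑ j ∈ s, w j ω|} ⊆
      {ω | u ≤ (∑ i ∈ s, w i) ω} ∪ {ω | u ≤ (∑ i ∈ s, fun ω => -(w i ω)) ω} := by
    intro ω hω
    simp only [Set.mem_setOf_eq] at hω
    rcases le_or_gt u (∑ j ∈ s, w j ω) with h | h
    · left; simpa using h
    · right
      have hneg : u ≤ -(∑ j ∈ s, w j ω) := by
        rcases abs_cases (∑ j ∈ s, w j ω) with ⟨he, _⟩ | ⟨he, _⟩
        · rw [he] at hω; linarith
        · rw [he] at hω; linarith
      simp only [Set.mem_setOf_eq, Finset.sum_apply]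
      rw [show (∑ c ∈ s, -w c ω) = -∑ c ∈ s, w c ω from by rw [← Finset.sum_neg_distrib]]
      exact hneg
  calc ℙ {ω | u ≤ |∑ j ∈ s, w j ω|} ≤
      ℙ {ω | u ≤ (∑ i ∈ s, w i) ω} + ℙ {ω | u ≤ (∑ i ∈ s, fun ω => -(w i ω)) ω} :=
        le_trans (measure_mono hsub) (measure_union_le _ _)
    _ ≤ ENNReal.ofReal (2 * Real.exp (-(u ^ 2) / (2 * s.card * a ^ 2))) := by
        rw [two_mul, ENNReal.ofReal_add (Real.exp_pos _).le (Real.exp_pos _).le]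
        gcongr
        · rw [← ENNReal.ofReal_toReal (measure_ne_top ℙ _)]
          exact ENNReal.ofReal_le_ofReal h1
        · rw [← ENNReal.ofReal_toReal (measure_ne_top ℙ _)]
          refine ENNReal.ofReal_le_ofReal ?_
          have := h2
          simpa [Pi.neg_apply] using this

lemma aux_log_ge_one (n : ℕ) : (1:ℝ) ≤ Real.log (Real.exp 1 + n) := by
  have h := Real.log_le_log (Real.exp_pos 1) (le_add_of_nonneg_right (n.cast_nonneg : (0:ℝ) ≤ n))
  rwa [Real.log_exp] at h

lemma aux_incr {Ω : Type*} [MeasureSpace Ω] [IsProbabilityMeasure (ℙ : Measure Ω)]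
    (w : ℕ → Ω → ℝ) (hm : ∀ k, Measurable (w k))
    (hindep : iIndepFun w ℙ) {a : ℝ} (ha : 0 < a)
    (h0 : ∀ k, ∫ ω, w k ω = 0) (hb : ∀ k, ∀ᵐ ω, |w k ω| ≤ a) :
    ∀ᵐ ω, ∃ K > (0:ℝ), ∀ n k : ℕ, 1 ≤ k → k ≤ n →
      |∑ j ∈ Finset.Ioc (n - k) n, w j ω| ≤
        K * Real.sqrt k * Real.sqrt (Real.log (Real.exp 1 + n)) := by
  set u : ℕ → ℕ → ℝ := fun n k => 3 * a * Real.sqrt (k * Real.log (Real.exp 1 + n)) with hu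
  set B : ℕ → Set Ω := fun n =>
    ⋃ k ∈ Finset.Icc 1 n, {ω | u n k ≤ |∑ j ∈ Finset.Ioc (n - k) n, w j ω|} with hB
  have hcard : ∀ n k : ℕ, k ≤ n → (Finset.Ioc (n - k) n).card = k := by
    intro n k hkn; rw [Nat.card_Ioc]; omega
  have hBn : ∀ n : ℕ, ℙ (B n) ≤
      ENNReal.ofReal (2 * ((n:ℝ)+1) * Real.exp (-(9/2) * Real.log (Real.exp 1 + n))) := by
    intro n
    have hlog := aux_log_ge_one n
    have key : ∀ k ∈ Finset.Icc 1 n,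
        ℙ {ω | u n k ≤ |∑ j ∈ Finset.Ioc (n - k) n, w j ω|} ≤
          ENNReal.ofReal (2 * Real.exp (-(9/2) * Real.log (Real.exp 1 + n))) := by
      intro k hk
      obtain ⟨hk1, hkn⟩ := Finset.mem_Icc.1 hk
      have hkpos : (0:ℝ) < k := by exact_mod_cast hk1
      have hupos : 0 < u n k := by
        rw [hu]
        have : (0:ℝ) < (k:ℝ) * Real.log (Real.exp 1 + n) := by nlinarith
        positivity
    
      have hcardpos : 0 < (Finset.Ioc (n - k) n).card := by rw [hcard n k hkn]; omega
      have h := aux_tail_abs w hm hindep ha h0 hb (Finset.Ioc (n - k) n) hcardpos (u n k) hupos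
      refine h.trans ?_
      apply ENNReal.ofReal_le_ofReal
      have heq : -(u n k ^ 2) / (2 * ((Finset.Ioc (n - k) n).card : ℝ) * a ^ 2) =
          -(9/2) * Real.log (Real.exp 1 + n) := by
        rw [hcard n k hkn, hu]
        have hsq : Real.sqrt ((k:ℝ) * Real.log (Real.exp 1 + n)) ^ 2 =
            (k:ℝ) * Real.log (Real.exp 1 + n) :=
          Real.sq_sqrt (by nlinarith)
        rw [mul_pow, mul_pow, hsq]
        field_simp
        ring
      rw [heq]
    calc ℙ (B n) ≤ ∑ k ∈ Finset.Icc 1 n,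
          ℙ {ω | u n k ≤ |∑ j ∈ Finset.Ioc (n - k) n, w j ω|} :=
        measure_biUnion_finset_le _ _
      _ ≤ ∑ k ∈ Finset.Icc 1 n,
          ENNReal.ofReal (2 * Real.exp (-(9/2) * Real.log (Real.exp 1 + n))) :=
        Finset.sum_le_sum key
      _ ≤ ENNReal.ofReal (2 * ((n:ℝ)+1) * Real.exp (-(9/2) * Real.log (Real.exp 1 + n))) := by
        rw [Finset.sum_const, Nat.card_Icc, Nat.add_sub_cancel]
        simp only [nsmul_eq_mul]
        rw [← ENNReal.ofReal_natCast n, ← ENNReal.ofReal_mul (by positivity)]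
        apply ENNReal.ofReal_le_ofReal
        have hexp := Real.exp_pos (-(9/2) * Real.log (Real.exp 1 + (n:ℝ)))
        nlinarith [(n.cast_nonneg : (0:ℝ) ≤ n)]
  -- summability of the bound
  have hsummable : Summable (fun n : ℕ =>
      2 * ((n:ℝ)+1) * Real.exp (-(9/2) * Real.log (Real.exp 1 + n))) := by
    have hbase : Summable (fun n : ℕ => 2 * ((n:ℝ)+1) ^ (-(7/2) : ℝ)) := by
      apply Summable.mul_left
      have h := (Real.summable_nat_rpow (p := -(7/2 : ℝ))).2 (by norm_num)
      have h2 := (summable_nat_add_iff 1).2 h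
      refine h2.congr ?_
      intro n
      push_cast
      ring_nf
    refine Summable.of_nonneg_of_le (fun n => by positivity) (fun n => ?_) hbase
    have hpos : (0:ℝ) < (n:ℝ) + 1 := by positivity
    have hlog2 : Real.log ((n:ℝ) + 1) ≤ Real.log (Real.exp 1 + n) :=
      Real.log_le_log hpos (by nlinarith [Real.exp_one_gt_d9, (n.cast_nonneg : (0:ℝ) ≤ n)])
    have h1 : Real.exp (-(9/2) * Real.log (Real.exp 1 + n)) ≤
        ((n:ℝ)+1) ^ (-(9/2) : ℝ) := by
      rw [Real.rpow_def_of_pos hpos, mul_comm]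
      exact Real.exp_le_exp.2 (by nlinarith)
    calc 2 * ((n:ℝ)+1) * Real.exp (-(9/2) * Real.log (Real.exp 1 + n))
        ≤ 2 * ((n:ℝ)+1) * ((n:ℝ)+1) ^ (-(9/2) : ℝ) := by
          apply mul_le_mul_of_nonneg_left h1 (by positivity)
      _ = 2 * ((n:ℝ)+1) ^ (-(7/2) : ℝ) := by
          rw [mul_assoc, mul_comm ((n:ℝ)+1),
            ← Real.rpow_add_one (by positivity : ((n:ℝ)+1) ≠ 0)]
          norm_num
      
  have hne : (∑' n, ℙ (B n)) ≠ ⊤ := by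
    apply ne_top_of_le_ne_top ?_ (ENNReal.tsum_le_tsum hBn)
    rw [← ENNReal.ofReal_tsum_of_nonneg (fun n => by positivity) hsummable]
    exact ENNReal.ofReal_ne_top
  have hBC := MeasureTheory.ae_eventually_notMem hne
  have hball : ∀ᵐ ω, ∀ j, |w j ω| ≤ a := ae_all_iff.2 hb
  filter_upwards [hBC, hball] with ω hω hbω
  obtain ⟨N, hN⟩ := Filter.eventually_atTop.1 hω
  refine ⟨3 * a + N * a + 1, by positivity, ?_⟩
  intro n k hk1 hkn
  have hlog := aux_log_ge_one n
  have hsl : (1:ℝ) ≤ Real.sqrt (Real.log (Real.exp 1 + n)) :=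
    le_trans (Real.sqrt_one).symm.le (Real.sqrt_le_sqrt hlog)
  have hsk : (1:ℝ) ≤ Real.sqrt k :=
    le_trans (Real.sqrt_one).symm.le (Real.sqrt_le_sqrt (by exact_mod_cast hk1))
  have hKfacts : 3 * a ≤ 3 * a + N * a + 1 := by
    nlinarith [(N.cast_nonneg : (0:ℝ) ≤ N)]
  by_cases hn : N ≤ n
  · have hnotin := hN n hn
    rw [hB] at hnotin
    simp only [Set.mem_iUnion, not_exists, Set.mem_setOf_eq, not_le] at hnotin
    have h := hnotin k (Finset.mem_Icc.2 ⟨hk1, hkn⟩)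
    have h2 : |∑ j ∈ Finset.Ioc (n - k) n, w j ω| ≤
        3 * a * (Real.sqrt k * Real.sqrt (Real.log (Real.exp 1 + n))) := by
      rw [← Real.sqrt_mul (k.cast_nonneg) _]
      exact le_of_lt h
    refine h2.trans ?_
    have hprod : (0:ℝ) ≤ Real.sqrt k * Real.sqrt (Real.log (Real.exp 1 + n)) := by positivity
    calc 3 * a * (Real.sqrt k * Real.sqrt (Real.log (Real.exp 1 + n)))
        ≤ (3 * a + N * a + 1) * (Real.sqrt k * Real.sqrt (Real.log (Real.exp 1 + n))) :=
          mul_le_mul_of_nonneg_right hKfacts hprod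
      _ = (3 * a + N * a + 1) * Real.sqrt k * Real.sqrt (Real.log (Real.exp 1 + n)) := by ring
  · push_neg at hn
    have hsum : |∑ j ∈ Finset.Ioc (n - k) n, w j ω| ≤ (k:ℝ) * a := by
      calc |∑ j ∈ Finset.Ioc (n - k) n, w j ω| ≤ ∑ j ∈ Finset.Ioc (n - k) n, |w j ω| :=
            Finset.abs_sum_le_sum_abs _ _
        _ ≤ ∑ j ∈ Finset.Ioc (n - k) n, a := Finset.sum_le_sum (fun j _ => hbω j)
        _ = (k:ℝ) * a := by rw [Finset.sum_const, hcard n k hkn, nsmul_eq_mul]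
    refine hsum.trans ?_
    have hkN : (k:ℝ) ≤ (N:ℝ) := by exact_mod_cast le_of_lt (lt_of_le_of_lt hkn hn)
    have h1 : (k:ℝ) * a ≤ (N:ℝ) * a := mul_le_mul_of_nonneg_right hkN ha.le
    refine h1.trans ?_
    have hprod : (1:ℝ) ≤ Real.sqrt k * Real.sqrt (Real.log (Real.exp 1 + n)) := by
      nlinarith
    nlinarith [Real.sqrt_nonneg (k:ℝ), Real.sqrt_nonneg (Real.log (Real.exp 1 + (n:ℝ))),
      (N.cast_nonneg : (0:ℝ) ≤ N)]

-- (D2)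
lemma aux_pow_sqrt {t : ℝ} (ht0 : 0 ≤ t) (ht1 : t < 1) (n : ℕ) (hn : 1 ≤ n) :
    t ^ (n - 1) * Real.sqrt n ≤ 2 / Real.sqrt (1 - t) := by
  have h1t : 0 < 1 - t := by linarith
  set x : ℝ := ((n:ℝ) - 1) * (1 - t) with hx
  have hn1 : (1:ℝ) ≤ n := by exact_mod_cast hn
  have hx0 : 0 ≤ x := by nlinarith
  have hpow : t ^ (n - 1) ≤ Real.exp (-x) := by
    have h1 : t ≤ Real.exp (t - 1) := by
      have := Real.add_one_le_exp (t - 1)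
      linarith
    calc t ^ (n - 1) ≤ Real.exp (t - 1) ^ (n - 1) := pow_le_pow_left₀ ht0 h1 _
      _ = Real.exp (((n:ℝ) - 1) * (t - 1)) := by
          rw [← Real.exp_nat_mul]
          congr 1
          have : ((n - 1 : ℕ) : ℝ) = (n:ℝ) - 1 := by
            push_cast [Nat.cast_sub hn]; ring
          rw [this]
      _ = Real.exp (-x) := by rw [hx]; ring_nf
  have hsq : Real.sqrt ((n:ℝ) * (1 - t)) ≤ Real.sqrt x + 1 := by
    have h2 : (n:ℝ) * (1 - t) = x + (1 - t) := by rw [hx]; ring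
    have h3 : (n:ℝ) * (1 - t) ≤ x + 1 := by rw [h2]; linarith
    have h4 := Real.sqrt_le_sqrt h3
    refine h4.trans ?_
    have h5 := Real.sq_sqrt (by linarith : (0:ℝ) ≤ x + 1)
    have h6 := Real.sq_sqrt hx0
    nlinarith [Real.sqrt_nonneg (x + 1), Real.sqrt_nonneg x,
      sq_nonneg (Real.sqrt (x + 1) - Real.sqrt x - 1)]
  have hkey : t ^ (n - 1) * Real.sqrt n * Real.sqrt (1 - t) ≤ 2 := by
    have e1 : Real.sqrt (n:ℝ) * Real.sqrt (1 - t) = Real.sqrt ((n:ℝ) * (1 - t)) :=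
      (Real.sqrt_mul (n.cast_nonneg) _).symm
    rw [mul_assoc, e1]
    have hexp : Real.exp (-x) * (Real.sqrt x + 1) ≤ 2 := by
      have hex := Real.add_one_le_exp x
      have hexpos := Real.exp_pos x
      have hsx := Real.sq_sqrt hx0
      have h7 : Real.sqrt x + 1 ≤ x + 2 := by
        nlinarith [Real.sqrt_nonneg x, sq_nonneg (Real.sqrt x - 1)]
      have h8 : x + 2 ≤ 2 * Real.exp x := by nlinarith
      rw [Real.exp_neg]
      rw [inv_mul_le_iff₀ hexpos] at *
      nlinarith
    calc t ^ (n - 1) * Real.sqrt ((n:ℝ) * (1 - t))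
        ≤ Real.exp (-x) * (Real.sqrt x + 1) := by
          apply mul_le_mul hpow hsq (Real.sqrt_nonneg _) (Real.exp_pos _).le
      _ ≤ 2 := hexp
  rw [le_div_iff₀ (Real.sqrt_pos.2 h1t)]
  exact hkey

-- (D3)
lemma aux_cs_sum {t : ℝ} (ht0 : 0 ≤ t) (ht1 : t < 1) (m : ℕ) :
    (1 - t) * ∑ i ∈ Finset.range m, t ^ i * Real.sqrt (i + 1) ≤ 1 / Real.sqrt (1 - t) := by
  have h1t : 0 < 1 - t := by linarith
  set S := ∑ i ∈ Finset.range m, t ^ i * Real.sqrt (i + 1) with hS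
  have hS0 : 0 ≤ S := Finset.sum_nonneg fun i _ => by positivity
  have hcs : S ≤ Real.sqrt (∑ i ∈ Finset.range m, t ^ i) *
      Real.sqrt (∑ i ∈ Finset.range m, t ^ i * ((i:ℝ) + 1)) := by
    have hcs0 := Real.sum_mul_le_sqrt_mul_sqrt (Finset.range m)
      (fun i => Real.sqrt (t ^ i)) (fun i => Real.sqrt (t ^ i) * Real.sqrt ((i:ℝ) + 1))
    have e1 : ∀ i : ℕ, Real.sqrt (t ^ i) * (Real.sqrt (t ^ i) * Real.sqrt ((i:ℝ) + 1)) =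
        t ^ i * Real.sqrt ((i:ℝ) + 1) := by
      intro i
      rw [← mul_assoc, Real.mul_self_sqrt (by positivity)]
    have e2 : ∀ i : ℕ, Real.sqrt (t ^ i) ^ 2 = t ^ i := fun i => Real.sq_sqrt (by positivity)
    have e3 : ∀ i : ℕ, (Real.sqrt (t ^ i) * Real.sqrt ((i:ℝ) + 1)) ^ 2 = t ^ i * ((i:ℝ) + 1) := by
      intro i
      rw [mul_pow, Real.sq_sqrt (by positivity : (0:ℝ) ≤ t ^ i),
        Real.sq_sqrt (by positivity : (0:ℝ) ≤ (i:ℝ) + 1)]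
    simp only [e1, e2, e3] at hcs0
    exact hcs0
  have hgeom : ∑ i ∈ Finset.range m, t ^ i ≤ 1 / (1 - t) := by
    have h := geom_sum_eq (by intro h; rw [h] at ht1; exact lt_irrefl 1 ht1 : t ≠ 1) m
    have he : (t ^ m - 1) / (t - 1) = (1 - t ^ m) / (1 - t) := by
      rw [← neg_sub (1:ℝ) t, ← neg_sub (1:ℝ) (t ^ m), neg_div_neg_eq]
    rw [h, he, div_le_div_iff₀ h1t h1t]
    have h2 : (0:ℝ) ≤ t ^ m := by positivity
    nlinarith
  have hgeom2 : ∑ i ∈ Finset.range m, t ^ i * ((i:ℝ) + 1) ≤ 1 / (1 - t) ^ 2 := by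
    have habs : |t| < 1 := by rw [abs_of_nonneg ht0]; exact ht1
    have h1 : HasSum (fun i : ℕ => (i:ℝ) * t ^ i) (t / (1 - t) ^ 2) :=
      hasSum_coe_mul_geometric_of_norm_lt_one (by rwa [Real.norm_eq_abs])
    have h2 : HasSum (fun i : ℕ => t ^ i) (1 - t)⁻¹ :=
      hasSum_geometric_of_lt_one ht0 ht1
    have h3 : HasSum (fun i : ℕ => t ^ i * ((i:ℝ) + 1)) (t / (1 - t) ^ 2 + (1 - t)⁻¹) := by
      have h4 := h1.add h2
      convert h4 using 2 with i
      ring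
    have h5 : ∑ i ∈ Finset.range m, t ^ i * ((i:ℝ) + 1) ≤ t / (1 - t) ^ 2 + (1 - t)⁻¹ :=
      sum_le_hasSum _ (fun i _ => by positivity) h3
    refine h5.trans (le_of_eq ?_)
    have hne : (1 - t) ≠ 0 := h1t.ne'
    field_simp
    ring
  -- combine
  have hs1 : Real.sqrt (∑ i ∈ Finset.range m, t ^ i) ≤ Real.sqrt (1 / (1 - t)) :=
    Real.sqrt_le_sqrt hgeom
  have hs2 : Real.sqrt (∑ i ∈ Finset.range m, t ^ i * ((i:ℝ) + 1)) ≤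
      Real.sqrt (1 / (1 - t) ^ 2) := Real.sqrt_le_sqrt hgeom2
  have hSb : S ≤ Real.sqrt (1 / (1 - t)) * Real.sqrt (1 / (1 - t) ^ 2) := by
    refine hcs.trans ?_
    exact mul_le_mul hs1 hs2 (Real.sqrt_nonneg _) (Real.sqrt_nonneg _)
  have he : Real.sqrt (1 / (1 - t)) * Real.sqrt (1 / (1 - t) ^ 2) =
      1 / ((1 - t) * Real.sqrt (1 - t)) := by
    have hsne : Real.sqrt (1 - t) ≠ 0 := (Real.sqrt_pos.2 h1t).ne'
    have e0 : (1:ℝ) / (1 - t) ^ 2 = (1 / (1 - t)) ^ 2 := by rw [one_div, one_div, ← inv_pow]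
    rw [e0, Real.sqrt_sq (by positivity), one_div, Real.sqrt_inv, one_div, mul_inv, mul_comm]
  rw [he] at hSb
  have hs1t : 0 < Real.sqrt (1 - t) := Real.sqrt_pos.2 h1t
  calc (1 - t) * S ≤ (1 - t) * (1 / ((1 - t) * Real.sqrt (1 - t))) :=
        mul_le_mul_of_nonneg_left hSb h1t.le
    _ = 1 / Real.sqrt (1 - t) := by field_simp

lemma aux_det {t : ℝ} (ht0 : 0 ≤ t) (ht1 : t < 1) {K L : ℝ} (hK : 0 < K) (hL : 1 ≤ L)
    (g : ℕ → ℝ) {n : ℕ} (hn : 0 < n)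
    (hG : ∀ m : ℕ, 1 ≤ m → m ≤ n → |∑ j ∈ Finset.range m, g j| ≤ K * Real.sqrt m * L) :
    |∑ k ∈ Finset.range n, t ^ k * g k| ≤ 3 * K * L / Real.sqrt (1 - t) := by
  have h1t : 0 < 1 - t := by linarith
  have habel := Finset.sum_range_by_parts (fun k => t ^ k) g n
  simp only [smul_eq_mul] at habel
  rw [habel]
  have hA : |t ^ (n-1) * ∑ i ∈ Finset.range n, g i| ≤ 2 / Real.sqrt (1 - t) * (K * L) := by
    rw [abs_mul, abs_pow, abs_of_nonneg ht0]
    calc t^(n-1) * |∑ i ∈ Finset.range n, g i| ≤ t^(n-1) * (K * Real.sqrt n * L) :=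
          mul_le_mul_of_nonneg_left (hG n hn le_rfl) (by positivity)
      _ = (t^(n-1) * Real.sqrt n) * (K * L) := by ring
      _ ≤ (2 / Real.sqrt (1 - t)) * (K * L) :=
          mul_le_mul_of_nonneg_right (aux_pow_sqrt ht0 ht1 n hn) (by positivity)
  have hB : |∑ i ∈ Finset.range (n-1), (t^(i+1) - t^i) * ∑ j ∈ Finset.range (i+1), g j| ≤
      1 / Real.sqrt (1 - t) * (K * L) := by
    calc |∑ i ∈ Finset.range (n-1), (t^(i+1) - t^i) * ∑ j ∈ Finset.range (i+1), g j|
        ≤ ∑ i ∈ Finset.range (n-1), |(t^(i+1) - t^i) * ∑ j ∈ Finset.range (i+1), g j| :=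
          Finset.abs_sum_le_sum_abs _ _
      _ ≤ ∑ i ∈ Finset.range (n-1), (1-t) * t^i * (K * Real.sqrt ((i:ℝ)+1) * L) := by
          apply Finset.sum_le_sum
          intro i hi
          rw [abs_mul]
          have e1 : |t^(i+1) - t^i| = (1-t) * t^i := by
            have hps : t^(i+1) = t^i * t := pow_succ t i
            rw [abs_of_nonpos (by nlinarith [pow_nonneg ht0 i, hps] : t^(i+1) - t^i ≤ 0), hps]
            ring
          rw [e1]
          have hin : i + 1 ≤ n := by
            have := Finset.mem_range.1 hi
            omega
          have hGi := hG (i+1) (by omega) hin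
          have ecast : Real.sqrt ((i+1 : ℕ):ℝ) = Real.sqrt ((i:ℝ)+1) := by push_cast; ring_nf
          rw [ecast] at hGi
          exact mul_le_mul_of_nonneg_left hGi (by positivity)
      _ = ((1-t) * ∑ i ∈ Finset.range (n-1), t^i * Real.sqrt ((i:ℝ)+1)) * (K*L) := by
          rw [Finset.mul_sum, Finset.sum_mul]
          apply Finset.sum_congr rfl
          intro i _
          ring
      _ ≤ 1 / Real.sqrt (1 - t) * (K * L) :=
          mul_le_mul_of_nonneg_right (aux_cs_sum ht0 ht1 (n-1)) (by positivity)
  calc |t ^ (n-1) * (∑ i ∈ Finset.range n, g i) -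
        ∑ i ∈ Finset.range (n-1), (t^(i+1) - t^i) * ∑ j ∈ Finset.range (i+1), g j|
      ≤ |t ^ (n-1) * ∑ i ∈ Finset.range n, g i| +
        |∑ i ∈ Finset.range (n-1), (t^(i+1) - t^i) * ∑ j ∈ Finset.range (i+1), g j| :=
        abs_sub _ _
    _ ≤ 2 / Real.sqrt (1 - t) * (K * L) + 1 / Real.sqrt (1 - t) * (K * L) := add_le_add hA hB
    _ = 3 * K * L / Real.sqrt (1 - t) := by ring

lemma aux_reindex (n m : ℕ) (hm : m ≤ n) (w : ℕ → ℝ) :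
    ∑ k ∈ Finset.range m, w (n - k) = ∑ j ∈ Finset.Ioc (n - m) n, w j := by
  apply Finset.sum_nbij' (i := fun k => n - k) (j := fun j => n - j)
  · intro k hk
    simp only [Finset.mem_range] at hk
    simp only [Finset.mem_Ioc]
    omega
  · intro j hj
    simp only [Finset.mem_Ioc] at hj
    simp only [Finset.mem_range]
    omega
  · intro k hk
    simp only [Finset.mem_range] at hk
    omega
  · intro j hj
    simp only [Finset.mem_Ioc] at hj
    omega
  · intro k hk
    rfl

theorem statement_14 {Ω : Type*} [MeasureSpace Ω] [IsProbabilityMeasure (ℙ : Measure Ω)]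
    (z : ℕ → Ω → ℝ) (a : ℝ) (ha : 0 < a)
    (hmeas : ∀ k, Measurable (z k))
    (hindep : iIndepFun z ℙ)
    (hid : ∀ n, IdentDistrib (z n) (z 0) ℙ ℙ)
    (hmean : ∀ k, ∫ ω, z k ω = 0)
    (hbdd : ∀ k, ∀ᵐ ω, |z k ω| ≤ a) :
    ∀ᵐ ω, ∃ C > (0 : ℝ), ∀ θ : ℝ, -1 < θ → θ < 1 → ∀ n : ℕ, 0 < n →
      |∑ k ∈ Finset.range n, θ ^ k * z (n - k) ω| ≤
        C * Real.sqrt (1 / (1 - θ ^ 2)) * Real.sqrt (Real.log (Real.exp 1 + n)) := by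
  set z' : ℕ → Ω → ℝ := fun j ω => (-1:ℝ)^j * z j ω with hz'
  have hmeas' : ∀ k, Measurable (z' k) := fun k => (hmeas k).const_mul _
  have hindep' : iIndepFun z' ℙ :=
    hindep.comp (fun j (x:ℝ) => (-1:ℝ)^j * x) (fun j => measurable_const_mul _)
  have hmean' : ∀ k, ∫ ω, z' k ω = 0 := by
    intro k
    rw [hz']
    simp only [integral_const_mul, hmean k, mul_zero]
  have hbdd' : ∀ k, ∀ᵐ ω, |z' k ω| ≤ a := by
    intro k
    filter_upwards [hbdd k] with ω h
    rw [hz']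
    simp only [abs_mul, abs_pow, abs_neg, abs_one, one_pow, one_mul]
    exact h
  filter_upwards [aux_incr z hmeas hindep ha hmean hbdd,
    aux_incr z' hmeas' hindep' ha hmean' hbdd'] with ω h₁' h₂'
  obtain ⟨K₁, hK₁, h₁⟩ := h₁'
  obtain ⟨K₂, hK₂, h₂⟩ := h₂'
  set K := max K₁ K₂ with hKdef
  have hK : 0 < K := lt_of_lt_of_le hK₁ (le_max_left _ _)
  refine ⟨5 * K, by positivity, ?_⟩
  intro θ hθ1 hθ2 n hn
  set L := Real.sqrt (Real.log (Real.exp 1 + n)) with hL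
  have hL1 : 1 ≤ L := le_trans Real.sqrt_one.symm.le (Real.sqrt_le_sqrt (aux_log_ge_one n))
  have habs : |θ| < 1 := abs_lt.2 ⟨hθ1, hθ2⟩
  have h1t : 0 < 1 - |θ| := by linarith
  -- the two partial-sum hypotheses
  have hG1 : ∀ m : ℕ, 1 ≤ m → m ≤ n →
      |∑ j ∈ Finset.range m, z (n - j) ω| ≤ K * Real.sqrt m * L := by
    intro m hm1 hmn
    rw [show (∑ j ∈ Finset.range m, z (n - j) ω) =
        ∑ j ∈ Finset.Ioc (n - m) n, z j ω from aux_reindex n m hmn (fun j => z j ω)]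
    refine (h₁ n m hm1 hmn).trans ?_
    have : K₁ ≤ K := le_max_left _ _
    have hp : (0:ℝ) ≤ Real.sqrt m * L := by positivity
    calc K₁ * Real.sqrt m * L = K₁ * (Real.sqrt m * L) := by ring
      _ ≤ K * (Real.sqrt m * L) := mul_le_mul_of_nonneg_right this hp
      _ = K * Real.sqrt m * L := by ring
  have hG2 : ∀ m : ℕ, 1 ≤ m → m ≤ n →
      |∑ j ∈ Finset.range m, z' (n - j) ω| ≤ K * Real.sqrt m * L := by
    intro m hm1 hmn
    rw [show (∑ j ∈ Finset.range m, z' (n - j) ω) =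
        ∑ j ∈ Finset.Ioc (n - m) n, z' j ω from aux_reindex n m hmn (fun j => z' j ω)]
    refine (h₂ n m hm1 hmn).trans ?_
    have : K₂ ≤ K := le_max_right _ _
    have hp : (0:ℝ) ≤ Real.sqrt m * L := by positivity
    calc K₂ * Real.sqrt m * L = K₂ * (Real.sqrt m * L) := by ring
      _ ≤ K * (Real.sqrt m * L) := mul_le_mul_of_nonneg_right this hp
      _ = K * Real.sqrt m * L := by ring
  have key : |∑ k ∈ Finset.range n, θ ^ k * z (n - k) ω| ≤ 3 * K * L / Real.sqrt (1 - |θ|) := by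
    rcases le_or_gt 0 θ with hθ | hθ
    · rw [abs_of_nonneg hθ]
      exact aux_det hθ hθ2 hK hL1 (fun k => z (n - k) ω) hn hG1
    · have ht0 : 0 ≤ -θ := by linarith
      have ht1 : -θ < 1 := by linarith
      have heq : ∑ k ∈ Finset.range n, θ ^ k * z (n - k) ω =
          (-1:ℝ)^n * ∑ k ∈ Finset.range n, (-θ)^k * z' (n - k) ω := by
        rw [Finset.mul_sum]
        apply Finset.sum_congr rfl
        intro k hk
        have hkn : k ≤ n := le_of_lt (Finset.mem_range.1 hk)
        have hsign : (-1:ℝ)^n * ((-1:ℝ)^k * (-1:ℝ)^(n-k)) = 1 := by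
          rw [← pow_add, ← pow_add, show n + (k + (n - k)) = 2 * n from by omega, pow_mul]
          norm_num
        show θ ^ k * z (n - k) ω = (-1:ℝ)^n * ((-θ)^k * ((-1:ℝ)^(n-k) * z (n - k) ω))
        rw [neg_pow θ k]
        linear_combination (-(θ ^ k * z (n - k) ω)) * hsign
      rw [heq, abs_mul, abs_pow, abs_neg, abs_one, one_pow, one_mul, abs_of_neg hθ]
      exact aux_det ht0 ht1 hK hL1 (fun k => z' (n - k) ω) hn hG2
  refine key.trans ?_
  -- convert to the √(1/(1-θ²)) form
  have h2t : 0 < 1 - θ^2 := by nlinarith [sq_abs θ]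
  have hcmp : (1 - |θ|)⁻¹ ≤ 2 * (1 / (1 - θ^2)) := by
    rw [show 2 * (1 / (1 - θ^2)) = 2 / (1 - θ^2) from by ring, inv_eq_one_div,
      div_le_div_iff₀ h1t h2t]
    nlinarith [sq_abs θ, abs_nonneg θ]
  have hchain : 3 * K * L / Real.sqrt (1 - |θ|) ≤ 3 * K * L * (Real.sqrt 2 * Real.sqrt (1 / (1 - θ^2))) := by
    rw [div_eq_mul_inv, ← Real.sqrt_inv, ← Real.sqrt_mul (by norm_num : (0:ℝ) ≤ 2)]
    apply mul_le_mul_of_nonneg_left (Real.sqrt_le_sqrt hcmp) (by positivity)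
  refine hchain.trans ?_
  have hs2 : Real.sqrt 2 ≤ 5/3 := by
    nlinarith [Real.sq_sqrt (by norm_num : (0:ℝ) ≤ 2), Real.sqrt_nonneg 2]
  have hs : (0:ℝ) ≤ Real.sqrt (1 / (1 - θ^2)) := Real.sqrt_nonneg _
  have h35 : 3 * Real.sqrt 2 ≤ 5 := by nlinarith
  have hKLs : (0:ℝ) ≤ K * (L * Real.sqrt (1 / (1 - θ^2))) :=
    mul_nonneg hK.le (mul_nonneg (by linarith) hs)
  calc 3 * K * L * (Real.sqrt 2 * Real.sqrt (1 / (1 - θ^2)))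
      = (3 * Real.sqrt 2) * (K * (L * Real.sqrt (1 / (1 - θ^2)))) := by ring
    _ ≤ 5 * (K * (L * Real.sqrt (1 / (1 - θ^2)))) := mul_le_mul_of_nonneg_right h35 hKLs
    _ = 5 * K * Real.sqrt (1 / (1 - θ^2)) * L := by ring
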